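/- The Mean–Gini Tail mean-risk model is (1, 2ε^{1/2} d_IQ(F_X,F_Y))-consistent with ε-SSD: for integrable real random variables X and Y with distributions F_X ≠ F_Y having square-integrable integrated quantile functions, if ε_IQ(F_X, F_Y) ≤ ε for some ε > 0, then μ_X − Γ_X ≥ μ_Y − Γ_Y − 2 ε^{1/2} d_IQ(F_X, F_Y). -/

import Mathlib

/-!
Since `∫₀¹ μ_X p dp = μ_X / 2`, one has `μ_X − Γ_X = 2 ∫₀¹ F_X^{(-2)}`, so the claim reads
`∫₀¹ (F_Y^{(-2)} − F_X^{(-2)}) ≤ √ε d_IQ`. Bound the integrand by its positive part `h₊` and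
apply Cauchy–Schwarz on the unit interval: `∫₀¹ h₊ ≤ (∫₀¹ h₊²)^{1/2} = ε_IQ^{1/2} d_IQ`.
-/

open MeasureTheory Filter Set ProbabilityTheory

noncomputable def quantileFn (μ : Measure ℝ) (p : ℝ) : ℝ :=
  sInf {η : ℝ | p ≤ (μ (Set.Iic η)).toReal}

noncomputable def intQuantile (μ : Measure ℝ) (p : ℝ) : ℝ :=
  ∫ t in (0:ℝ)..p, quantileFn μ t

noncomputable def dIQ (μ ν : Measure ℝ) : ℝ :=
  Real.sqrt (∫ t in (0:ℝ)..1, (intQuantile μ t - intQuantile ν t) ^ 2)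

noncomputable def epsIQ (μ ν : Measure ℝ) : ℝ :=
  (∫ t in (0:ℝ)..1, (max (intQuantile ν t - intQuantile μ t) 0) ^ 2) / dIQ μ ν ^ 2

/-- The mean of a random variable. -/
noncomputable def rvMean {Ω : Type*} [MeasureSpace Ω] (X : Ω → ℝ) : ℝ := ∫ ω, X ω

/-- The Gini tail `Γ_X = 2 ∫₀¹ (μ_X p − F_X^{(-2)}(p)) dp` of a random variable. -/
noncomputable def giniTail {Ω : Type*} [MeasureSpace Ω] (X : Ω → ℝ) : ℝ :=
  2 * ∫ p in (0:ℝ)..1, (rvMean X * p - intQuantile ((ℙ : Measure Ω).map X) p)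

instance : IsProbabilityMeasure (volume.restrict (Ioc (0 : ℝ) 1)) :=
  ⟨by simp⟩

lemma sq_integral_le_integral_sq {Ω : Type*} [MeasurableSpace Ω] {ν : Measure Ω}
    [IsProbabilityMeasure ν] {h : Ω → ℝ} (hh : MemLp h 2 ν) :
    (∫ x, h x ∂ν) ^ 2 ≤ ∫ x, h x ^ 2 ∂ν := by
  have hvar := variance_nonneg h ν
  rw [variance_eq_sub hh] at hvar
  simpa [sub_nonneg] using hvar

lemma integral_le_sqrt_integral_sq_posPart {Ω : Type*} [MeasurableSpace Ω] {ν : Measure Ω}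
    [IsProbabilityMeasure ν] {h : Ω → ℝ} (hh : MemLp h 2 ν) :
    ∫ x, h x ∂ν ≤ √(∫ x, max (h x) 0 ^ 2 ∂ν) :=
  calc ∫ x, h x ∂ν ≤ ∫ x, max (h x) 0 ∂ν :=
        integral_mono (hh.integrable one_le_two) (hh.pos_part.integrable one_le_two)
          fun _ => le_max_left _ _
    _ ≤ √(∫ x, max (h x) 0 ^ 2 ∂ν) :=
        Real.le_sqrt_of_sq_le (sq_integral_le_integral_sq hh.pos_part)

lemma aestronglyMeasurable_primitive {E : Type*} [NormedAddCommGroup E] [NormedSpace ℝ E]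
    {f : ℝ → E} {a b : ℝ} (hf : AEStronglyMeasurable f (volume.restrict (Ioc a b))) :
    AEStronglyMeasurable (fun p => ∫ t in a..p, f t) (volume.restrict (Ioc a b)) := by
  -- On `Ioc a b`, `∫ t in a..p, f t = ∫ t, 𝟙{t ≤ p} f t`, a parametric integral over the square.
  have hF : AEStronglyMeasurable ({q : ℝ × ℝ | q.2 ≤ q.1}.indicator fun q => f q.2)
      ((volume.restrict (Ioc a b)).prod (volume.restrict (Ioc a b))) :=
    hf.comp_snd.indicator (measurableSet_le measurable_snd measurable_fst)
  refine hF.integral_prod_right'.congr ?_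
  filter_upwards [ae_restrict_mem measurableSet_Ioc] with p hp
  change ∫ t, (Iic p).indicator f t ∂(volume.restrict (Ioc a b)) = _
  rw [integral_indicator measurableSet_Iic, Measure.restrict_restrict measurableSet_Iic,
    Iic_inter_Ioc_of_le hp.2, intervalIntegral.integral_of_le hp.1.le]

lemma bddBelow_setOf_le_cdf (μ : Measure ℝ) {p : ℝ} (hp : 0 < p) :
    BddBelow {η | p ≤ cdf μ η} := by
  obtain ⟨N, hN⟩ := ((tendsto_cdf_atBot μ).eventually (gt_mem_nhds hp)).exists_forall_of_atBot
  exact ⟨N, fun η hη => le_of_not_ge fun hηN => (hN η hηN).not_ge hη⟩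

lemma nonempty_setOf_le_cdf (μ : Measure ℝ) {p : ℝ} (hp : p < 1) :
    {η | p ≤ cdf μ η}.Nonempty :=
  ((tendsto_cdf_atTop μ).eventually (eventually_ge_nhds hp)).exists

lemma quantileFn_eq_sInf_cdf (μ : Measure ℝ) [IsProbabilityMeasure μ] (p : ℝ) :
    quantileFn μ p = sInf {η | p ≤ cdf μ η} := by
  simp only [quantileFn, cdf_eq_real, measureReal_def]

lemma quantileFn_monotoneOn (μ : Measure ℝ) [IsProbabilityMeasure μ] :
    MonotoneOn (quantileFn μ) (Ioo 0 1) := by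
  intro p hp q hq hpq
  rw [quantileFn_eq_sInf_cdf, quantileFn_eq_sInf_cdf]
  exact csInf_le_csInf (bddBelow_setOf_le_cdf μ hp.1) (nonempty_setOf_le_cdf μ hq.2)
    fun η hη => hpq.trans hη

lemma aemeasurable_quantileFn (μ : Measure ℝ) [IsProbabilityMeasure μ] :
    AEMeasurable (quantileFn μ) (volume.restrict (Ioc 0 1)) := by
  rw [← Measure.restrict_congr_set Ioo_ae_eq_Ioc]
  exact aemeasurable_restrict_of_monotoneOn measurableSet_Ioo (quantileFn_monotoneOn μ)

lemma memLp_intQuantile (μ : Measure ℝ) [IsProbabilityMeasure μ]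
    (h : IntegrableOn (fun t => intQuantile μ t ^ 2) (Ioc 0 1)) :
    MemLp (intQuantile μ) 2 (volume.restrict (Ioc 0 1)) :=
  (memLp_two_iff_integrable_sq
    (aestronglyMeasurable_primitive (aemeasurable_quantileFn μ).aestronglyMeasurable)).2 h

lemma rvMean_sub_giniTail {Ω : Type*} [MeasureSpace Ω] (X : Ω → ℝ)
    (hX : IntegrableOn (intQuantile ((ℙ : Measure Ω).map X)) (Ioc 0 1)) :
    rvMean X - giniTail X = 2 * ∫ p in (0:ℝ)..1, intQuantile ((ℙ : Measure Ω).map X) p := by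
  rw [giniTail, intervalIntegral.integral_sub (f := fun p => rvMean X * p)
    ((continuous_const.mul continuous_id).intervalIntegrable 0 1)
    ((intervalIntegrable_iff_integrableOn_Ioc_of_le zero_le_one).2 hX),
    intervalIntegral.integral_const_mul, integral_id]
  ring

lemma integral_intQuantile_sub_le_sqrt_mul_dIQ {μ ν : Measure ℝ}
    (hμ : MemLp (intQuantile μ) 2 (volume.restrict (Ioc 0 1)))
    (hν : MemLp (intQuantile ν) 2 (volume.restrict (Ioc 0 1))) {ε : ℝ} (hε : epsIQ μ ν ≤ ε) :
    (∫ p in (0:ℝ)..1, intQuantile ν p) - ∫ p in (0:ℝ)..1, intQuantile μ p ≤ √ε * dIQ μ ν := by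
  set N := ∫ t in Ioc 0 1, max (intQuantile ν t - intQuantile μ t) 0 ^ 2
  set I := ∫ t in Ioc 0 1, (intQuantile μ t - intQuantile ν t) ^ 2
  have hI : 0 ≤ I := integral_nonneg fun t => sq_nonneg _
  have hdIQ : dIQ μ ν = √I := by rw [dIQ, intervalIntegral.integral_of_le zero_le_one]
  have hepsIQ : epsIQ μ ν = N / I := by
    rw [epsIQ, hdIQ, Real.sq_sqrt hI, intervalIntegral.integral_of_le zero_le_one]
  have hNI : N ≤ I := by
    refine integral_mono_of_nonneg (ae_of_all _ fun t => sq_nonneg _) (hμ.sub hν).integrable_sq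
      (ae_of_all _ fun t => ?_)
    beta_reduce
    rw [← sq_abs (intQuantile μ t - intQuantile ν t), abs_sub_comm]
    exact pow_le_pow_left₀ (le_max_right _ _) (max_le (le_abs_self _) (abs_nonneg _)) 2
  have hNεI : N ≤ ε * I := by
    -- When `I = 0`, `epsIQ μ ν = N / 0 = 0` carries no information and `N ≤ I` is needed.
    rcases hI.eq_or_lt with hI0 | hIpos
    · rw [← hI0, mul_zero]
      exact hNI.trans hI0.ge
    · exact (div_le_iff₀ hIpos).1 (hepsIQ ▸ hε)
  calc (∫ p in (0:ℝ)..1, intQuantile ν p) - ∫ p in (0:ℝ)..1, intQuantile μ p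
      = ∫ t in Ioc 0 1, (intQuantile ν t - intQuantile μ t) := by
        rw [intervalIntegral.integral_of_le zero_le_one,
          intervalIntegral.integral_of_le zero_le_one, integral_sub (hν.integrable one_le_two) (hμ.integrable one_le_two)]
    _ ≤ √N := integral_le_sqrt_integral_sq_posPart (hν.sub hμ)
    _ ≤ √(ε * I) := Real.sqrt_le_sqrt hNεI
    _ = √ε * dIQ μ ν := by rw [Real.sqrt_mul' ε hI, hdIQ]

theorem meanGini_consistent_with_epsSSD_general
    {Ω : Type*} [MeasureSpace Ω] [IsProbabilityMeasure (ℙ : Measure Ω)]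
    (X Y : Ω → ℝ)
    (hXint : Integrable X ℙ) (hYint : Integrable Y ℙ)
    (hXsq : IntegrableOn (fun t => intQuantile ((ℙ : Measure Ω).map X) t ^ 2)
      (Set.Ioc (0:ℝ) 1) volume)
    (hYsq : IntegrableOn (fun t => intQuantile ((ℙ : Measure Ω).map Y) t ^ 2)
      (Set.Ioc (0:ℝ) 1) volume)
    (ε : ℝ)
    (hdom : epsIQ ((ℙ : Measure Ω).map X) ((ℙ : Measure Ω).map Y) ≤ ε) :
    rvMean X - giniTail X ≥
      rvMean Y - giniTail Y -
        2 * Real.sqrt ε * dIQ ((ℙ : Measure Ω).map X) ((ℙ : Measure Ω).map Y) := by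
  have := Measure.isProbabilityMeasure_map (μ := ℙ) hXint.aemeasurable
  have := Measure.isProbabilityMeasure_map (μ := ℙ) hYint.aemeasurable
  have hX := memLp_intQuantile _ hXsq
  have hY := memLp_intQuantile _ hYsq
  rw [rvMean_sub_giniTail X (hX.integrable one_le_two),
    rvMean_sub_giniTail Y (hY.integrable one_le_two)]
  linarith [integral_intQuantile_sub_le_sqrt_mul_dIQ hX hY hdom]

/-- the Mean–Gini Tail mean-risk model is
`(1, 2 √ε d_IQ(F_X,F_Y))`-consistent with `ε`-SSD. -/
theorem meanGini_consistent_with_epsSSD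
    {Ω : Type*} [MeasureSpace Ω] [IsProbabilityMeasure (ℙ : Measure Ω)]
    (X Y : Ω → ℝ) (hXmeas : Measurable X) (hYmeas : Measurable Y)
    (hXint : Integrable X ℙ) (hYint : Integrable Y ℙ)
    (hne : (ℙ : Measure Ω).map X ≠ (ℙ : Measure Ω).map Y)
    (hXsq : IntegrableOn (fun t => intQuantile ((ℙ : Measure Ω).map X) t ^ 2)
      (Set.Ioc (0:ℝ) 1) volume)
    (hYsq : IntegrableOn (fun t => intQuantile ((ℙ : Measure Ω).map Y) t ^ 2)
      (Set.Ioc (0:ℝ) 1) volume)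
    (ε : ℝ) (hε : 0 < ε)
    (hdom : epsIQ ((ℙ : Measure Ω).map X) ((ℙ : Measure Ω).map Y) ≤ ε) :
    rvMean X - giniTail X ≥
      rvMean Y - giniTail Y -
        2 * Real.sqrt ε * dIQ ((ℙ : Measure Ω).map X) ((ℙ : Measure Ω).map Y) :=
  meanGini_consistent_with_epsSSD_general X Y hXint hYint hXsq hYsq ε hdom
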